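/- arXiv:2202.09742 — 5 statements merged into one kernel-verified Lean document; each statement's English description precedes it below -/
import Mathlib

section
/- (Pliss Lemma) Let A, c₁, c₂ be real numbers with c₂ < c₁ ≤ A, and set θ = (c₁ − c₂)/(A − c₂) > 0. Then for every N ≥ 1 and every sequence of real numbers a₁, …, a_N with aᵢ ≤ A for all i and Σ_{i=1}^N aᵢ ≥ c₁ N, there exist at least l ≥ θN indices 1 ≤ n₁ < n₂ < ⋯ < n_l ≤ N such that for every j and every 0 ≤ n < n_j one has Σ_{i=n+1}^{n_j} aᵢ ≥ c₂ (n_j − n). -/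
/-!
Subtract `c₂` from every term and call `k` a record time of the partial sums `S` if no
earlier partial sum exceeds `S k`. The terms `aᵢ - c₂` are at most `A - c₂`, so the partial
sums climb by at most `A - c₂` at a record time and stay below an earlier value at any other
time; hence `S N ≤ (number of record times) · (A - c₂)`. Since `S N ≥ (c₁ - c₂) N`,
there are at least `θ N` record times, and being a record time says exactly that every
final segment ending there has average at least `c₂`.
-/

open Finset

namespace Pliss

section Records

variable {α : Type*} [LinearOrder α]

def IsRecord (S : ℕ → α) (n : ℕ) : Prop := ∀ m < n, S m ≤ S n

instance (S : ℕ → α) : DecidablePred (IsRecord S) := fun n =>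
  inferInstanceAs (Decidable (∀ m < n, S m ≤ S n))

theorem card_filter_isRecord_Icc_succ {S : ℕ → α} {k : ℕ} (hk : IsRecord S (k + 1)) :
    #{i ∈ Icc 1 (k + 1) | IsRecord S i} = #{i ∈ Icc 1 k | IsRecord S i} + 1 := by
  rw [← insert_Icc_right_eq_Icc_add_one (by omega), filter_insert, if_pos hk,
    card_insert_of_notMem]
  simp

theorem card_filter_isRecord_Icc_mono (S : ℕ → α) {m n : ℕ} (h : m ≤ n) :
    #{i ∈ Icc 1 m | IsRecord S i} ≤ #{i ∈ Icc 1 n | IsRecord S i} :=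
  card_le_card (filter_subset_filter _ (Icc_subset_Icc_right h))

theorem le_card_filter_isRecord_nsmul [AddCommMonoid α] [IsOrderedAddMonoid α] {S : ℕ → α}
    {B : α} (hB : 0 ≤ B) (h0 : S 0 ≤ 0) (n : ℕ) (hstep : ∀ k < n, S (k + 1) ≤ S k + B) :
    S n ≤ #{i ∈ Icc 1 n | IsRecord S i} • B := by
  induction n using Nat.strong_induction_on with
  | _ n ih =>
  by_cases hrec : IsRecord S n
  · cases n with
    | zero => simpa using h0
    | succ k =>
      calc S (k + 1) ≤ S k + B := hstep k k.lt_succ_self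
        _ ≤ #{i ∈ Icc 1 k | IsRecord S i} • B + B := by
          gcongr
          exact ih k k.lt_succ_self fun i hi => hstep i (by omega)
        _ = #{i ∈ Icc 1 (k + 1) | IsRecord S i} • B := by
          rw [card_filter_isRecord_Icc_succ hrec, succ_nsmul]
  · obtain ⟨m, hmn, hlt⟩ : ∃ m < n, S n < S m := by simpa [IsRecord] using hrec
    calc S n ≤ S m := hlt.le
      _ ≤ #{i ∈ Icc 1 m | IsRecord S i} • B := ih m hmn fun k hk => hstep k (by omega)
      _ ≤ #{i ∈ Icc 1 n | IsRecord S i} • B :=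
        nsmul_le_nsmul_left hB (card_filter_isRecord_Icc_mono S hmn.le)

end Records

theorem sum_Icc_one_sub_sum_Icc_one {M : Type*} [AddCommGroup M] (f : ℕ → M) {m n : ℕ}
    (h : m ≤ n) : ∑ i ∈ Icc 1 n, f i - ∑ i ∈ Icc 1 m, f i = ∑ i ∈ Icc (m + 1) n, f i := by
  have := sum_Ioc_consecutive f (Nat.zero_le m) h
  simp only [← Icc_add_one_left_eq_Ioc, zero_add] at this
  rw [← this, add_sub_cancel_left]

theorem sum_Icc_sub_const (a : ℕ → ℝ) (c : ℝ) {m n : ℕ} (h : m ≤ n) :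
    ∑ i ∈ Icc (m + 1) n, (a i - c) = ∑ i ∈ Icc (m + 1) n, a i - c * (n - m) := by
  rw [sum_sub_distrib, sum_const, Nat.card_Icc, nsmul_eq_mul, Nat.add_sub_add_right,
    Nat.cast_sub h, mul_comm]

end Pliss

theorem pliss_lemma_general (A c₁ c₂ : ℝ) (h₁ : c₂ < c₁) (h₂ : c₁ ≤ A)
    (N : ℕ) (a : ℕ → ℝ)
    (ha : ∀ i ∈ Finset.Icc 1 N, a i ≤ A)
    (hsum : c₁ * N ≤ ∑ i ∈ Finset.Icc 1 N, a i) :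
    0 < (c₁ - c₂) / (A - c₂) ∧
    ∃ (l : ℕ) (n : Fin l → ℕ),
      ((c₁ - c₂) / (A - c₂)) * N ≤ (l : ℝ) ∧
      StrictMono n ∧
      (∀ j, 1 ≤ n j ∧ n j ≤ N) ∧
      (∀ j, ∀ m < n j, c₂ * ((n j : ℝ) - (m : ℝ)) ≤ ∑ i ∈ Finset.Icc (m + 1) (n j), a i) := by
  have hAc : 0 < A - c₂ := by linarith
  refine ⟨div_pos (sub_pos.2 h₁) hAc, ?_⟩
  let S : ℕ → ℝ := fun n => ∑ i ∈ Icc 1 n, (a i - c₂)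
  have hS_sub {m n : ℕ} (h : m ≤ n) : S n - S m = ∑ i ∈ Icc (m + 1) n, a i - c₂ * (n - m) := by
    rw [Pliss.sum_Icc_one_sub_sum_Icc_one _ h, Pliss.sum_Icc_sub_const _ _ h]
  let E := {k ∈ Icc 1 N | Pliss.IsRecord S k}
  have hE : (c₁ - c₂) * N ≤ #E * (A - c₂) := calc
    (c₁ - c₂) * N ≤ S N := by
      have := hS_sub (Nat.zero_le N)
      simp only [S, Icc_eq_empty_of_lt one_pos, sum_empty, zero_add, sub_zero, Nat.cast_zero]
        at this
      linarith
    _ ≤ #E • (A - c₂) := Pliss.le_card_filter_isRecord_nsmul hAc.le (by simp [S]) N fun k hk => by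
      have := hS_sub k.le_succ
      simp only [Icc_self, sum_singleton, Nat.cast_succ] at this
      linarith [ha (k + 1) (mem_Icc.2 ⟨by omega, hk⟩)]
    _ = #E * (A - c₂) := nsmul_eq_mul _ _
  refine ⟨#E, E.orderEmbOfFin rfl, by rwa [div_mul_eq_mul_div, div_le_iff₀ hAc],
    (E.orderEmbOfFin rfl).strictMono, fun j => ?_, fun j m hm => ?_⟩
  · exact mem_Icc.1 (mem_filter.1 (E.orderEmbOfFin_mem rfl j)).1
  · linarith [(mem_filter.1 (E.orderEmbOfFin_mem rfl j)).2 m hm, hS_sub hm.le]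

/-- **Pliss Lemma.**  Let `c₂ < c₁ ≤ A` and `θ = (c₁ − c₂)/(A − c₂)`.  For every `N ≥ 1`
and reals `a₁, …, a_N` with `aᵢ ≤ A` and `Σ aᵢ ≥ c₁ N`, there exist `l ≥ θ N` indices
`1 ≤ n₁ < ⋯ < n_l ≤ N` such that `Σ_{i=n+1}^{n_j} aᵢ ≥ c₂ (n_j − n)` for all `j` and all
`0 ≤ n < n_j`. -/
theorem pliss_lemma (A c₁ c₂ : ℝ) (h₁ : c₂ < c₁) (h₂ : c₁ ≤ A)
    (N : ℕ) (hN : 1 ≤ N) (a : ℕ → ℝ)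
    (ha : ∀ i ∈ Finset.Icc 1 N, a i ≤ A)
    (hsum : c₁ * N ≤ ∑ i ∈ Finset.Icc 1 N, a i) :
    0 < (c₁ - c₂) / (A - c₂) ∧
    ∃ (l : ℕ) (n : Fin l → ℕ),
      ((c₁ - c₂) / (A - c₂)) * N ≤ (l : ℝ) ∧
      StrictMono n ∧
      (∀ j, 1 ≤ n j ∧ n j ≤ N) ∧
      (∀ j, ∀ m < n j, c₂ * ((n j : ℝ) - (m : ℝ)) ≤ ∑ i ∈ Finset.Icc (m + 1) (n j), a i) :=
  pliss_lemma_general A c₁ c₂ h₁ h₂ N a ha hsum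
end

section
/- Let V be a finite-dimensional real inner product space, A : V → V a linear automorphism, v ∈ V a nonzero vector, and w a unit vector orthogonal to v. Let P = span{v, w} and let π denote the orthogonal projection of V onto the orthogonal complement of A v. Then the absolute value of the determinant of the restriction A|_P : P → A(P) (computed with respect to orthonormal bases of P and A(P)) satisfies |det(A|_P)| = (‖A v‖/‖v‖) · ‖π(A w)‖. -/
/-!
Any two orthonormal bases of `P` differ by a matrix of determinant `±1`, so the basis may be
taken to be `(u, w)` with `u = v / ‖v‖`. For the matrix `M` in orthonormal coordinates, `Mᵀ M`
is the Gram matrix of the images, hence `det² = ‖A u‖² ‖A w‖² - ⟪A u, A w⟫²`, and splitting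
`A w` along `A v` and its orthogonal complement (Pythagoras) turns this into `‖A u‖² ‖π (A w)‖²`.
-/

open RealInnerProductSpace Matrix Module

section

variable {E F : Type*} [NormedAddCommGroup E] [InnerProductSpace ℝ E]
  [NormedAddCommGroup F] [InnerProductSpace ℝ F]

theorem gram_comp_eq_transpose_mul_toMatrix {ι κ : Type*} [Fintype ι] [DecidableEq ι]
    [Fintype κ] (b : OrthonormalBasis ι ℝ E) (c : OrthonormalBasis κ ℝ F) (f : E →ₗ[ℝ] F) :
    gram ℝ (f ∘ b) =
      (LinearMap.toMatrix b.toBasis c.toBasis f)ᵀ * LinearMap.toMatrix b.toBasis c.toBasis f := by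
  rw [gram_eq_conjTranspose_mul c, conjTranspose_eq_transpose_of_trivial]
  congr <;> ext i j <;> simp [LinearMap.toMatrix_apply]

theorem sq_det_toMatrix_eq_det_gram {ι : Type*} [Fintype ι] [DecidableEq ι]
    (b : OrthonormalBasis ι ℝ E) (c : OrthonormalBasis ι ℝ F) (f : E →ₗ[ℝ] F) :
    (LinearMap.toMatrix b.toBasis c.toBasis f).det ^ 2 = (gram ℝ (f ∘ b)).det := by
  rw [gram_comp_eq_transpose_mul_toMatrix b c, det_mul, det_transpose, sq]

theorem det_gram_fin_two (v : Fin 2 → E) :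
    (gram ℝ v).det = ‖v 0‖ ^ 2 * ‖v 1‖ ^ 2 - ⟪v 0, v 1⟫ ^ 2 := by
  simp only [det_fin_two, gram_apply, real_inner_self_eq_norm_sq, real_inner_comm (v 0) (v 1)]
  ring

theorem norm_sq_mul_norm_sq_sub_inner_sq (x y : E) :
    ‖x‖ ^ 2 * ‖y‖ ^ 2 - ⟪x, y⟫ ^ 2 =
      (‖x‖ * ‖Submodule.orthogonalProjectionOnto ((ℝ ∙ x)ᗮ) y‖) ^ 2 := by
  have hpyth := Submodule.norm_sq_eq_add_norm_sq_projection y (ℝ ∙ x)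
  have hproj : ‖x‖ ^ 2 * ‖Submodule.orthogonalProjectionOnto (ℝ ∙ x) y‖ ^ 2 = ⟪x, y⟫ ^ 2 := by
    rcases eq_or_ne x 0 with rfl | hx
    · simp
    rw [← Submodule.norm_coe, ← Submodule.starProjection_apply, Submodule.starProjection_singleton,
      RCLike.ofReal_real_eq_id, id_eq, norm_smul, Real.norm_eq_abs, mul_pow, sq_abs]
    field_simp
  rw [mul_pow]
  linear_combination ‖x‖ ^ 2 * hpyth + hproj

theorem abs_det_toMatrix_congr_left {ι : Type*} [Fintype ι] [DecidableEq ι]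
    (b b' : OrthonormalBasis ι ℝ E) (c : OrthonormalBasis ι ℝ F) (f : E →ₗ[ℝ] F) :
    |(LinearMap.toMatrix b.toBasis c.toBasis f).det| =
      |(LinearMap.toMatrix b'.toBasis c.toBasis f).det| := by
  rw [← linearMap_toMatrix_mul_basis_toMatrix b'.toBasis b.toBasis, det_mul, abs_mul,
    ← Basis.det_apply, b'.coe_toBasis, ← Real.norm_eq_abs (b.toBasis.det b'),
    b.det_to_matrix_orthonormalBasis, mul_one]

theorem orthonormal_vecCons_two {x y : E} (hx : ‖x‖ = 1) (hy : ‖y‖ = 1) (hxy : ⟪x, y⟫ = 0) :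
    Orthonormal ℝ ![x, y] := by
  rw [orthonormal_iff_ite]
  simp [Fin.forall_fin_two, hxy, real_inner_comm x y, hx, hy]

noncomputable def Orthonormal.codRestrictOrthonormalBasis {ι : Type*} [Fintype ι] [Nonempty ι]
    {v : ι → E} (hv : Orthonormal ℝ v) {P : Submodule ℝ E} (hmem : ∀ i, v i ∈ P)
    (hcard : Fintype.card ι = finrank ℝ P) : OrthonormalBasis ι ℝ P :=
  OrthonormalBasis.mk (hv.codRestrict P hmem)
    ((hv.codRestrict P hmem).linearIndependent.span_eq_top_of_card_eq_finrank hcard).ge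

@[simp]
theorem Orthonormal.coe_codRestrictOrthonormalBasis_apply {ι : Type*} [Fintype ι] [Nonempty ι]
    {v : ι → E} (hv : Orthonormal ℝ v) {P : Submodule ℝ E} (hmem : ∀ i, v i ∈ P)
    (hcard : Fintype.card ι = finrank ℝ P) (i : ι) :
    (hv.codRestrictOrthonormalBasis hmem hcard i : E) = v i := by
  simp [Orthonormal.codRestrictOrthonormalBasis]

end

theorem abs_det_restrict_two_plane_general {V : Type*} [NormedAddCommGroup V]
    [InnerProductSpace ℝ V]
    (A : V ≃ₗ[ℝ] V) (v w : V) (hv : v ≠ 0) (hw : ‖w‖ = 1)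
    (hvw : ⟪v, w⟫ = 0)
    (P Q : Submodule ℝ V) (hP : P = Submodule.span ℝ {v, w})
    (hAPQ : ∀ x ∈ P, A.toLinearMap x ∈ Q)
    (b : OrthonormalBasis (Fin 2) ℝ P) (c : OrthonormalBasis (Fin 2) ℝ Q) :
    |(LinearMap.toMatrix b.toBasis c.toBasis (A.toLinearMap.restrict hAPQ)).det| =
      (‖A v‖ / ‖v‖) * ‖Submodule.orthogonalProjectionOnto ((ℝ ∙ (A v))ᗮ) (A w)‖ := by
  set u := ‖v‖⁻¹ • v
  have hnv : ‖v‖ ≠ 0 := norm_ne_zero_iff.mpr hv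
  have hu : ‖u‖ = 1 := by rw [norm_smul, norm_inv, norm_norm, inv_mul_cancel₀ hnv]
  have huw : ⟪u, w⟫ = 0 := by rw [real_inner_smul_left, hvw, mul_zero]
  have hmem : ∀ i, ![u, w] i ∈ P := by
    subst hP
    simp only [Fin.forall_fin_two]
    exact ⟨Submodule.smul_mem _ _ (Submodule.subset_span (by simp)),
      Submodule.subset_span (by simp)⟩
  let e := (orthonormal_vecCons_two hu hw huw).codRestrictOrthonormalBasis hmem
    (by rw [Fintype.card_fin, finrank_eq_card_basis b.toBasis, Fintype.card_fin])
  rw [abs_det_toMatrix_congr_left b e, ← sq_eq_sq₀ (abs_nonneg _) (by positivity), sq_abs,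
    sq_det_toMatrix_eq_det_gram, det_gram_fin_two]
  have hfe : ∀ i, ((A.toLinearMap.restrict hAPQ (e i) : Q) : V) = A (![u, w] i) := by simp [e]
  simp only [Function.comp_apply, ← Submodule.norm_coe, Submodule.coe_inner, hfe]
  simp only [cons_val_zero, cons_val_one, u, map_smul, norm_smul, real_inner_smul_left, norm_inv,
    norm_norm]
  rw [Submodule.norm_coe, div_eq_inv_mul, mul_assoc, mul_pow _ (‖A v‖ * _),
    ← norm_sq_mul_norm_sq_sub_inner_sq]
  ring

/-- For a linear automorphism `A` of a finite-dimensional real inner product space, a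
nonzero vector `v`, a unit vector `w ⟂ v`, the 2-plane `P = span{v,w}` and the orthogonal
projection `π` onto `(A v)ᗮ`, the determinant of the restriction `A|_P : P → A(P)`
(computed w.r.t. orthonormal bases of `P` and `A(P)`) satisfies
`|det (A|_P)| = (‖A v‖/‖v‖) · ‖π (A w)‖`. -/
theorem abs_det_restrict_two_plane {V : Type*} [NormedAddCommGroup V]
    [InnerProductSpace ℝ V] [FiniteDimensional ℝ V]
    (A : V ≃ₗ[ℝ] V) (v w : V) (hv : v ≠ 0) (hw : ‖w‖ = 1)
    (hvw : ⟪v, w⟫ = 0)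
    (P Q : Submodule ℝ V) (hP : P = Submodule.span ℝ {v, w})
    (hQ : Q = P.map A.toLinearMap)
    (hAPQ : ∀ x ∈ P, A.toLinearMap x ∈ Q)
    (b : OrthonormalBasis (Fin 2) ℝ P) (c : OrthonormalBasis (Fin 2) ℝ Q) :
    |(LinearMap.toMatrix b.toBasis c.toBasis (A.toLinearMap.restrict hAPQ)).det| =
      (‖A v‖ / ‖v‖) * ‖Submodule.orthogonalProjectionOnto ((ℝ ∙ (A v))ᗮ) (A w)‖ :=
  abs_det_restrict_two_plane_general A v w hv hw hvw P Q hP hAPQ b c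
end

section
/- Let X be a compact metric space, (μ_n) a sequence of Borel probability measures converging to μ in the weak* topology, (F_n) a sequence of closed subsets of X, and θ > 0 such that μ_n(F_n) ≥ θ for all n. Let H = ⋂_{m≥0} closure(⋃_{k≥m} F_k). Then μ(H) ≥ θ. -/
open MeasureTheory Filter Topology
open scoped NNReal ENNReal

/-- If probability measures `μ_n` converge weakly-* to `μ` on a compact metric space,
`F_n` are closed sets with `μ_n(F_n) ≥ θ`, and `H = ⋂_m closure (⋃_{k ≥ m} F_k)`, then
`μ(H) ≥ θ`. -/
theorem measure_limsup_closed_sets {X : Type*} [MetricSpace X] [CompactSpace X]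
    [MeasurableSpace X] [BorelSpace X]
    (μ : ℕ → ProbabilityMeasure X) (μ₀ : ProbabilityMeasure X)
    (hconv : Tendsto μ atTop (𝓝 μ₀))
    (F : ℕ → Set X) (hF : ∀ n, IsClosed (F n))
    (θ : ℝ≥0) (hθ : 0 < θ) (hμF : ∀ n, θ ≤ μ n (F n)) :
    θ ≤ μ₀ (⋂ m : ℕ, closure (⋃ k : ℕ, ⋃ _ : m ≤ k, F k)) := by
  set C : ℕ → Set X := fun m => closure (⋃ k : ℕ, ⋃ _ : m ≤ k, F k) with hC
  have hCclosed : ∀ m, IsClosed (C m) := fun m => isClosed_closure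
  have hanti : Antitone C := by
    intro a b hab
    apply closure_mono
    refine Set.iUnion₂_subset fun k hk => ?_
    exact Set.subset_iUnion₂ (s := fun k _ => F k) k (hab.trans hk)
  -- each C m has μ₀ measure ≥ θ (in ℝ≥0∞)
  have key : ∀ m, (θ : ℝ≥0∞) ≤ (μ₀ : Measure X) (C m) := by
    intro m
    have hlimsup := ProbabilityMeasure.limsup_measure_closed_le_of_tendsto hconv
      (hCclosed m)
    refine le_trans ?_ hlimsup
    refine le_limsup_of_frequently_le ?_ (by isBoundedDefault)
    refine (eventually_ge_atTop m).frequently.mono fun n hn => ?_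
    have hsub : F n ⊆ C m :=
      (Set.subset_iUnion₂ (s := fun k _ => F k) n hn).trans subset_closure
    calc (θ : ℝ≥0∞) ≤ (μ n : Measure X) (F n) := by
          have := hμF n
          rw [← ProbabilityMeasure.ennreal_coeFn_eq_coeFn_toMeasure]
          exact_mod_cast this
      _ ≤ (μ n : Measure X) (C m) := measure_mono hsub
  have htend : Tendsto ((μ₀ : Measure X) ∘ C) atTop (𝓝 ((μ₀ : Measure X) (⋂ m, C m))) :=
    tendsto_measure_iInter_atTop
      (fun m => ((hCclosed m).measurableSet).nullMeasurableSet) hanti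
      ⟨0, measure_ne_top _ _⟩
  have : (θ : ℝ≥0∞) ≤ (μ₀ : Measure X) (⋂ m, C m) :=
    ge_of_tendsto' htend fun m => key m
  rw [← ProbabilityMeasure.ennreal_coeFn_eq_coeFn_toMeasure] at this
  exact_mod_cast this
end

section
/- Let f : X → X be a continuous map of a compact metric space, let m be any Borel probability measure on X (e.g. normalized Lebesgue measure on a manifold), and let d* be a metric inducing the weak* topology on the space of Borel probability measures. Then there exists an f-invariant Borel probability measure μ such that for every ε > 0 the set B_ε(μ) = {x ∈ X : d*(τ_f(x), μ) < ε} has m(B_ε(μ)) > 0, where d*(τ_f(x), μ) = inf{d*(ν,μ) : ν ∈ τ_f(x)} and τ_f(x) is the set of weak* limit points of the empirical measures (1/n)Σ_{i=0}^{n−1} δ_{f^i(x)}. -/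
open MeasureTheory Filter Topology
open scoped ENNReal NNReal

/-- The empirical measure `(1/(n+1)) Σ_{i ≤ n} δ_{f^i(x)}`. -/
noncomputable def empiricalMeasure {X : Type*} [MeasurableSpace X] (f : X → X) (x : X)
    (n : ℕ) : Measure X :=
  ((n : ℝ≥0∞) + 1)⁻¹ • ∑ i ∈ Finset.range (n + 1), Measure.dirac (f^[i] x)

instance empiricalMeasure_isProbabilityMeasure {X : Type*} [MeasurableSpace X]
    (f : X → X) (x : X) (n : ℕ) : IsProbabilityMeasure (empiricalMeasure f x n) := by
  constructor
  have h : (∑ i ∈ Finset.range (n + 1), Measure.dirac (f^[i] x)) Set.univ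
      = (n : ℝ≥0∞) + 1 := by
    rw [Measure.finset_sum_apply]
    simp [measure_univ]
  rw [empiricalMeasure, Measure.smul_apply, h, smul_eq_mul, ENNReal.inv_mul_cancel]
  · simp
  · simp [ENNReal.add_eq_top]

/-- The empirical measure as a probability measure. -/
noncomputable def empirical {X : Type*} [MeasurableSpace X] (f : X → X) (x : X) (n : ℕ) :
    ProbabilityMeasure X :=
  ⟨empiricalMeasure f x n, empiricalMeasure_isProbabilityMeasure f x n⟩

/-- `τ_f(x)`: the set of weak* limit points of the empirical measures of the orbit of
`x`. -/
def tauSet {X : Type*} [MeasurableSpace X] [TopologicalSpace X] [OpensMeasurableSpace X]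
    (f : X → X) (x : X) : Set (ProbabilityMeasure X) :=
  {ν | MapClusterPt ν atTop (empirical f x)}

/-!
Every weak* limit point of the empirical measures of `x` is `f`-invariant, since the averages
of `g ∘ f` and of `g` along the orbit differ by the telescoping term
`(g (f^[n+1] x) - g x) / (n + 1)`; and `τ_f(x)` is nonempty because the probability measures on
a compact space form a compact space. If every invariant `μ` had a neighbourhood `U_μ` such that
`{x | τ_f(x) meets U_μ}` is `m`-null, finitely many `U_μ` would cover the compact set of
invariant measures, and the corresponding null sets would cover `X`.
-/

theorem MapClusterPt.eq_of_tendsto {α β : Type*} [TopologicalSpace β] [T2Space β]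
    {F : Filter α} {u : α → β} {x y : β} (hx : MapClusterPt x F u) (hu : Tendsto u F (𝓝 y)) :
    x = y :=
  eq_of_nhds_neBot (ClusterPt.mono hx hu)

theorem IsCompact.exists_forall_mem_nhds_measure_pos {α Ω : Type*} [TopologicalSpace α]
    [MeasurableSpace Ω] {K : Set α} (hK : IsCompact K) (τ : Ω → Set α)
    (hτ : ∀ ω, (τ ω ∩ K).Nonempty) (m : Measure Ω) [NeZero m] :
    ∃ μ ∈ K, ∀ s ∈ 𝓝 μ, 0 < m {ω | (τ ω ∩ s).Nonempty} := by
  by_contra! h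
  choose! s hs hnull using h
  obtain ⟨t, htK, hcover⟩ := hK.elim_nhds_subcover s hs
  have huniv : Set.univ ⊆ ⋃ μ ∈ t, {ω | (τ ω ∩ s μ).Nonempty} := by
    intro ω _
    obtain ⟨ν, hντ, hνK⟩ := hτ ω
    obtain ⟨μ, hμt, hνμ⟩ := Set.mem_iUnion₂.mp (hcover hνK)
    exact Set.mem_iUnion₂.mpr ⟨μ, hμt, ν, hντ, hνμ⟩
  refine NeZero.ne m (Measure.measure_univ_eq_zero.mp (le_antisymm ?_ zero_le))
  calc m Set.univ ≤ ∑ μ ∈ t, m {ω | (τ ω ∩ s μ).Nonempty} :=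
        (measure_mono huniv).trans (measure_biUnion_finset_le _ _)
    _ = 0 := Finset.sum_eq_zero fun μ hμ => le_antisymm (hnull μ (htK μ hμ)) zero_le

section Empirical

variable {X : Type*} [MeasurableSpace X] (f : X → X) (x : X)

theorem integral_empirical {E : Type*} [NormedAddCommGroup E] [NormedSpace ℝ E] [CompleteSpace E] {g : X → E}
    (hg : StronglyMeasurable g) (n : ℕ) :
    ∫ y, g y ∂(empirical f x n : Measure X)
      = ((n : ℝ) + 1)⁻¹ • ∑ i ∈ Finset.range (n + 1), g (f^[i] x) := by
  have hdirac : ∀ a, Integrable g (Measure.dirac a) := fun a => integrable_dirac' hg enorm_lt_top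
  change ∫ y, g y ∂(empiricalMeasure f x n) = _
  rw [empiricalMeasure, integral_smul_measure, integral_finsetSum_measure fun i _ => hdirac _]
  simp only [integral_dirac' g _ hg]
  norm_cast
  rw [ENNReal.toReal_inv]
  push_cast
  rfl

theorem integral_empirical_comp_sub {E : Type*} [NormedAddCommGroup E] [NormedSpace ℝ E]
    [CompleteSpace E] {g : X → E} (hg : StronglyMeasurable g)
    (hgf : StronglyMeasurable fun y => g (f y)) (n : ℕ) :
    ∫ y, g (f y) ∂(empirical f x n : Measure X) - ∫ y, g y ∂(empirical f x n : Measure X)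
      = ((n : ℝ) + 1)⁻¹ • (g (f^[n + 1] x) - g x) := by
  rw [integral_empirical f x hgf, integral_empirical f x hg, ← smul_sub]
  congr 1
  simp only [← Function.iterate_succ_apply' f, ← Finset.sum_sub_distrib]
  exact Finset.sum_range_sub (fun i => g (f^[i] x)) (n + 1)

theorem tendsto_integral_empirical_comp_sub {E : Type*} [NormedAddCommGroup E] [NormedSpace ℝ E]
    [CompleteSpace E] {g : X → E} (hg : StronglyMeasurable g)
    (hgf : StronglyMeasurable fun y => g (f y)) {C : ℝ} (hC : ∀ y, ‖g y‖ ≤ C) :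
    Tendsto (fun n => ∫ y, g (f y) ∂(empirical f x n : Measure X)
      - ∫ y, g y ∂(empirical f x n : Measure X)) atTop (𝓝 0) := by
  simp only [integral_empirical_comp_sub f x hg hgf]
  have hinv : Tendsto (fun n : ℕ => ((n : ℝ) + 1)⁻¹) atTop (𝓝 0) := by
    simpa only [one_div] using tendsto_one_div_add_atTop_nhds_zero_nat (𝕜 := ℝ)
  refine hinv.zero_smul_isBoundedUnder_le (isBoundedUnder_of ⟨C + C, fun n => ?_⟩)
  exact (norm_sub_le _ _).trans (add_le_add (hC _) (hC _))

end Empirical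

theorem tauSet_nonempty {X : Type*} [MeasurableSpace X] [TopologicalSpace X] [T2Space X]
    [CompactSpace X] [BorelSpace X] (f : X → X) (x : X) : (tauSet f x).Nonempty :=
  exists_clusterPt_of_compactSpace _

section Invariant

variable {X : Type*} [MeasurableSpace X] [TopologicalSpace X] [HasOuterApproxClosed X]
  [BorelSpace X] {f : X → X}

theorem map_eq_of_mem_tauSet (hf : Continuous f) {x : X} {ν : ProbabilityMeasure X}
    (hν : ν ∈ tauSet f x) : Measure.map f (ν : Measure X) = ν := by
  refine ext_of_forall_integral_eq_of_IsFiniteMeasure fun g => ?_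
  rw [integral_map hf.aemeasurable g.continuous.aestronglyMeasurable]
  let Φ : ProbabilityMeasure X → ℝ := fun μ => ∫ y, g (f y) ∂(μ : Measure X) - ∫ y, g y ∂μ
  have hΦ : Continuous Φ :=
    (ProbabilityMeasure.continuous_integral_boundedContinuousFunction
      (g.compContinuous ⟨f, hf⟩)).sub
      (ProbabilityMeasure.continuous_integral_boundedContinuousFunction g)
  have hΦν : Φ ν = 0 := (hν.continuousAt_comp hΦ.continuousAt).eq_of_tendsto
    (tendsto_integral_empirical_comp_sub f x g.continuous.stronglyMeasurable
      (g.continuous.comp hf).stronglyMeasurable g.norm_coe_le_norm)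
  exact sub_eq_zero.mp hΦν

theorem isClosed_setOf_map_eq (hf : Continuous f) :
    IsClosed {μ : ProbabilityMeasure X | Measure.map f (μ : Measure X) = μ} := by
  have hmap : ∀ μ : ProbabilityMeasure X,
      Measure.map f (μ : Measure X) = μ ↔ μ.map hf.aemeasurable = μ := fun μ => by
    rw [← ProbabilityMeasure.toMeasure_injective.eq_iff, ProbabilityMeasure.toMeasure_map]
  simp only [hmap]
  exact isClosed_eq (ProbabilityMeasure.continuous_map hf) continuous_id

end Invariant

/-- **Existence of physical-like measures** (Catsigeras–Enrich).  If `f` is a continuous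
map of a compact metric space, `m` a Borel probability measure and `d*` a metric inducing
the weak* topology on probability measures, then there is an `f`-invariant probability
measure `μ` such that for every `ε > 0` the set `{x : d*(τ_f(x), μ) < ε}` has positive
`m`-measure. -/
theorem exists_physical_like_measure {X : Type*} [MetricSpace X] [CompactSpace X]
    [MeasurableSpace X] [BorelSpace X]
    (f : X → X) (hf : Continuous f)
    (m : ProbabilityMeasure X)
    (dstar : ProbabilityMeasure X → ProbabilityMeasure X → ℝ)
    (hdstar : ∀ (ν : ProbabilityMeasure X) (s : Set (ProbabilityMeasure X)),
      s ∈ 𝓝 ν ↔ ∃ ε > 0, {ρ | dstar ρ ν < ε} ⊆ s) :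
    ∃ μ : ProbabilityMeasure X,
      Measure.map f (μ : Measure X) = (μ : Measure X) ∧
      ∀ ε > 0, 0 < m {x | ∃ ν ∈ tauSet f x, dstar ν μ < ε} := by
  have hτ : ∀ x, (tauSet f x ∩ {μ | Measure.map f (μ : Measure X) = μ}).Nonempty := fun x =>
    let ⟨ν, hν⟩ := tauSet_nonempty f x
    ⟨ν, hν, map_eq_of_mem_tauSet hf hν⟩
  obtain ⟨μ, hμ, hpos⟩ := (isClosed_setOf_map_eq hf).isCompact.exists_forall_mem_nhds_measure_pos
    (tauSet f) hτ (m : Measure X)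
  refine ⟨μ, hμ, fun ε hε => ?_⟩
  have hball : {ρ | dstar ρ μ < ε} ∈ 𝓝 μ := (hdstar μ _).2 ⟨ε, hε, subset_rfl⟩
  rw [← ENNReal.coe_pos, ProbabilityMeasure.ennreal_coeFn_eq_coeFn_toMeasure]
  exact hpos _ hball
end

section
/- Let η > 0 and let (c_i)_{i∈ℤ} be a sequence of real numbers. Say that an index n ∈ ℤ is an η-hyperbolic time if Σ_{i=n}^{n+m−1} c_i ≤ −η m for every m ≥ 1. Suppose 0 is an η-hyperbolic time and none of the indices −1, −2, …, −l is an η-hyperbolic time. Then Σ_{i=−j}^{−1} c_i > −η j for every 1 ≤ j ≤ l. -/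
/-- Splitting lemma: the sum of `c` from `-b` to `-1` splits at `-a`. -/
lemma gap_split (c : ℤ → ℝ) {a b : ℕ} (hab : a ≤ b) :
    ∑ i ∈ Finset.range b, c (-(b : ℤ) + (i : ℤ)) =
      (∑ i ∈ Finset.range (b - a), c (-(b : ℤ) + (i : ℤ))) +
      ∑ i ∈ Finset.range a, c (-(a : ℤ) + (i : ℤ)) := by
  have hb : b = (b - a) + a := (Nat.sub_add_cancel hab).symm
  calc ∑ i ∈ Finset.range b, c (-(b : ℤ) + (i : ℤ))
      = ∑ i ∈ Finset.range ((b - a) + a), c (-(b : ℤ) + (i : ℤ)) := by rw [← hb]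
    _ = (∑ i ∈ Finset.range (b - a), c (-(b : ℤ) + (i : ℤ))) +
        ∑ i ∈ Finset.range a, c (-(b : ℤ) + ((b - a) + i : ℕ)) :=
        Finset.sum_range_add (fun i => c (-(b : ℤ) + (i : ℤ))) _ _
    _ = _ := by
        congr 1
        apply Finset.sum_congr rfl
        intro i _
        congr 1
        push_cast
        omega

/-- Gap bound between hyperbolic times: call `n ∈ ℤ` an `η`-hyperbolic time for the
sequence `c` if `Σ_{i=n}^{n+m−1} cᵢ ≤ −η m` for all `m ≥ 1`.  If `0` is an
`η`-hyperbolic time and none of `−1, …, −l` is, then `Σ_{i=−j}^{−1} cᵢ > −η j` for all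
`1 ≤ j ≤ l`. -/
theorem gap_between_hyperbolic_times (η : ℝ) (hη : 0 < η) (c : ℤ → ℝ) (l : ℕ)
    (h0 : ∀ m : ℕ, 1 ≤ m → ∑ i ∈ Finset.range m, c (i : ℤ) ≤ -η * m)
    (hno : ∀ k : ℕ, 1 ≤ k → k ≤ l →
      ¬ (∀ m : ℕ, 1 ≤ m →
          ∑ i ∈ Finset.range m, c (-(k : ℤ) + (i : ℤ)) ≤ -η * m)) :
    ∀ j : ℕ, 1 ≤ j → j ≤ l →
      -η * j < ∑ i ∈ Finset.range j, c (-(j : ℤ) + (i : ℤ)) := by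
  intro j hj1 hjl
  by_contra hcon
  push_neg at hcon
  -- S n : sum of c from -n to -1 ; T n = S n + η n
  set S : ℕ → ℝ := fun n => ∑ i ∈ Finset.range n, c (-(n : ℤ) + (i : ℤ)) with hS
  set T : ℕ → ℝ := fun n => S n + η * n with hT
  have hTj : T j ≤ 0 := by
    have : S j ≤ -η * j := hcon
    simp only [hT]
    linarith
  -- choose k in [1, j] minimizing T
  obtain ⟨k, hkmem, hkmin⟩ :=
    (Finset.Icc 1 j).exists_min_image T ⟨j, Finset.mem_Icc.mpr ⟨hj1, le_rfl⟩⟩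
  obtain ⟨hk1, hkj⟩ := Finset.mem_Icc.mp hkmem
  have hTk0 : T k ≤ 0 := le_trans (hkmin j (Finset.mem_Icc.mpr ⟨hj1, le_rfl⟩)) hTj
  refine hno k hk1 (le_trans hkj hjl) ?_
  intro m hm
  by_cases hmk : m ≤ k
  · -- block stays within [-k, -1]
    have hsplit := gap_split c (a := k - m) (b := k) (Nat.sub_le _ _)
    have hkm : k - (k - m) = m := by omega
    rw [hkm] at hsplit
    -- ∑ range m c(-k+i) = S k - S (k-m)
    have heq : ∑ i ∈ Finset.range m, c (-(k : ℤ) + (i : ℤ)) = S k - S (k - m) := by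
      simp only [hS]; linarith [hsplit]
    rw [heq]
    have hTle : T k ≤ T (k - m) := by
      rcases Nat.eq_zero_or_pos (k - m) with h | h
      · rw [h]
        have : T 0 = 0 := by simp [hT, hS]
        rw [this]; exact hTk0
      · exact hkmin (k - m) (Finset.mem_Icc.mpr ⟨h, by omega⟩)
    simp only [hT] at hTle
    have hc : ((k : ℝ) - (k - m : ℕ)) = m := by push_cast [Nat.cast_sub hmk]; ring
    nlinarith [hTle]
  · -- block crosses 0: split as S k + ∑_{i<m-k} c i
    push_neg at hmk
    have hsplit : ∑ i ∈ Finset.range m, c (-(k : ℤ) + (i : ℤ)) =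
        S k + ∑ i ∈ Finset.range (m - k), c (i : ℤ) := by
      have hm' : m = k + (m - k) := by omega
      calc ∑ i ∈ Finset.range m, c (-(k : ℤ) + (i : ℤ))
          = ∑ i ∈ Finset.range (k + (m - k)), c (-(k : ℤ) + (i : ℤ)) := by rw [← hm']
        _ = (∑ i ∈ Finset.range k, c (-(k : ℤ) + (i : ℤ))) +
            ∑ i ∈ Finset.range (m - k), c (-(k : ℤ) + ((k + i : ℕ) : ℤ)) :=
            Finset.sum_range_add (fun i => c (-(k : ℤ) + (i : ℤ))) _ _
        _ = S k + ∑ i ∈ Finset.range (m - k), c (i : ℤ) := by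
            congr 1
            apply Finset.sum_congr rfl
            intro i _
            congr 1
            push_cast
            ring
    rw [hsplit]
    have h1 : ∑ i ∈ Finset.range (m - k), c (i : ℤ) ≤ -η * (m - k : ℕ) :=
      h0 (m - k) (by omega)
    have h2 : S k ≤ -η * k := by
      simp only [hT] at hTk0; linarith
    have hc : ((m - k : ℕ) : ℝ) = (m : ℝ) - k := by push_cast [Nat.cast_sub hmk.le]; ring
    rw [hc] at h1
    nlinarith
end
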